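/- Let X be a finite topological space and 0 → F' → F → F'' → 0 a short exact sequence of abelian data on X. If F'' is coflasque, then the induced sequence 0 → L(X,F') → L(X,F) → L(X,F'') → 0 of abelian groups is exact. -/

import Mathlib

open CategoryTheory Topology CategoryTheory.Limits

/-! Core definitions: abelian data on a finite topological space. -/

abbrev AbData (X : Type) [TopologicalSpace X] : Type 1 := Specialization X ⥤ AddCommGrpCat.{0}
abbrev pt {X : Type} [TopologicalSpace X] (x : X) : Specialization X := Specialization.toEquiv x

section core
variable {X : Type} [TopologicalSpace X]
abbrev stalk (F : AbData X) (x : X) : Type := F.obj (pt x)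

lemma naturality_apply {F G : AbData X} (φ : F ⟶ G) {p q : Specialization X} (h : p ⟶ q)
    (a : F.obj p) : G.map h (φ.app p a) = φ.app q (F.map h a) := by
  have := congrArg (fun (f : F.obj p ⟶ G.obj q) => f a) (φ.naturality h)
  simp only [CategoryTheory.comp_apply] at this
  exact this.symm

/-- Compatible families: the sections of an abelian data over the whole space. -/
def compatSections (F : AbData X) : AddSubgroup (∀ x : X, F.obj (pt x)) where
  carrier := {u | ∀ (x y : X) (h : pt x ≤ pt y), F.map (homOfLE h) (u x) = u y}
  zero_mem' := by intro x y h; simp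
  add_mem' := by intro u v hu hv x y h; simp [map_add, hu x y h, hv x y h]
  neg_mem' := by intro u hu x y h; simp [hu x y h]

/-- The sections functor `Γ(X,-)`. -/
noncomputable def secFunctor (X : Type) [TopologicalSpace X] : AbData X ⥤ AddCommGrpCat.{0} where
  obj F := AddCommGrpCat.of (compatSections F)
  map {F G} φ :=
    AddCommGrpCat.ofHom
    { toFun := fun u => ⟨fun x => φ.app (pt x) (u.1 x), by
        intro x y h
        rw [naturality_apply φ (homOfLE h) (u.1 x), u.2 x y h]⟩
      map_zero' := by apply Subtype.ext; funext x; simp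
      map_add' := by intro u v; apply Subtype.ext; funext x; simp }
  map_id := by intro F; apply AddCommGrpCat.hom_ext; apply AddMonoidHom.ext; intro u; rfl
  map_comp := by intro F G H φ ψ; apply AddCommGrpCat.hom_ext; apply AddMonoidHom.ext; intro u; rfl

instance (X : Type) [TopologicalSpace X] : (secFunctor X).Additive where
  map_add := by
    intro F G φ ψ
    apply AddCommGrpCat.hom_ext; apply AddMonoidHom.ext; intro u; apply Subtype.ext; funext x
    rfl

noncomputable def cosecOf (F : AbData X) (x : X) : stalk F x →+ DirectSum X (stalk F) :=
  letI := Classical.decEq X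
  DirectSum.of (stalk F) x

/-- The relations defining cosections (the colimit presentation). -/
noncomputable def cosecRel (F : AbData X) : AddSubgroup (DirectSum X (stalk F)) :=
  AddSubgroup.closure {w | ∃ (x y : X) (h : pt x ≤ pt y) (a : stalk F x),
    w = cosecOf F y (F.map (homOfLE h) a) - cosecOf F x a}

/-- Cosections of `F` over the whole space: `L(X,F)`, presented as the quotient of the direct
sum `⊕ₓ F_x` by the relations `r_{xy}(a) - a`. -/
noncomputable def cosecGrp (F : AbData X) : AddCommGrpCat.{0} :=
  AddCommGrpCat.of (DirectSum X (stalk F) ⧸ cosecRel F)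

noncomputable def cosecMk (F : AbData X) (x : X) : stalk F x →+ cosecGrp F :=
  (QuotientAddGroup.mk' (cosecRel F)).comp (cosecOf F x)

lemma cosecHom_ext {F : AbData X} {H : Type} [AddCommGroup H] {f g : cosecGrp F →+ H}
    (h : ∀ (x : X) (a : stalk F x), f (cosecMk F x a) = g (cosecMk F x a)) : f = g := by
  letI := Classical.decEq X
  exact QuotientAddGroup.addMonoidHom_ext _ (DirectSum.addHom_ext fun x a => h x a)

noncomputable def cosecMapAux {F G : AbData X} (φ : F ⟶ G) :
    DirectSum X (stalk F) →+ cosecGrp G :=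
  letI := Classical.decEq X
  DirectSum.toAddMonoid (fun x => (cosecMk G x).comp (φ.app (pt x)).hom)

lemma cosecMapAux_of {F G : AbData X} (φ : F ⟶ G) (x : X) (a : stalk F x) :
    cosecMapAux φ (cosecOf F x a) = cosecMk G x (φ.app (pt x) a) := by
  letI := Classical.decEq X
  simp [cosecMapAux, cosecOf, DirectSum.toAddMonoid_of]

lemma cosecRel_le_ker {F G : AbData X} (φ : F ⟶ G) : cosecRel F ≤ (cosecMapAux φ).ker := by
  rw [cosecRel, AddSubgroup.closure_le]
  rintro w ⟨x, y, h, a, rfl⟩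
  have : (cosecMapAux φ) (cosecOf F y ((F.map (homOfLE h)) a) - cosecOf F x a) = 0 := by
    rw [map_sub, cosecMapAux_of, cosecMapAux_of, ← naturality_apply φ (homOfLE h) a]
    show (QuotientAddGroup.mk' (cosecRel G)) (cosecOf G y (G.map (homOfLE h) (φ.app (pt x) a)))
      - (QuotientAddGroup.mk' (cosecRel G)) (cosecOf G x (φ.app (pt x) a)) = 0
    erw [← map_sub]
    exact (QuotientAddGroup.eq_zero_iff _).mpr
      (AddSubgroup.subset_closure ⟨x, y, h, φ.app (pt x) a, rfl⟩)
  exact this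

noncomputable def cosecMap {F G : AbData X} (φ : F ⟶ G) : cosecGrp F →+ cosecGrp G :=
  QuotientAddGroup.lift (cosecRel F) (cosecMapAux φ) (cosecRel_le_ker φ)

lemma cosecMap_mk {F G : AbData X} (φ : F ⟶ G) (x : X) (a : stalk F x) :
    cosecMap φ (cosecMk F x a) = cosecMk G x (φ.app (pt x) a) := cosecMapAux_of φ x a

/-- The cosections functor `L(X,-)`. -/
noncomputable def cosecFunctor (X : Type) [TopologicalSpace X] : AbData X ⥤ AddCommGrpCat.{0} where
  obj F := cosecGrp F
  map φ := AddCommGrpCat.ofHom (cosecMap φ)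
  map_id F := by
    refine AddCommGrpCat.hom_ext (cosecHom_ext fun x a => ?_)
    show cosecMap (𝟙 F) (cosecMk _ x a) = _
    rw [cosecMap_mk]; rfl
  map_comp φ ψ := by
    refine AddCommGrpCat.hom_ext (cosecHom_ext fun x a => ?_)
    show cosecMap (φ ≫ ψ) (cosecMk _ x a) = cosecMap ψ (cosecMap φ (cosecMk _ x a))
    rw [cosecMap_mk, cosecMap_mk, cosecMap_mk]; rfl

instance (X : Type) [TopologicalSpace X] : (cosecFunctor X).Additive where
  map_add := by
    intro F G φ ψ
    refine AddCommGrpCat.hom_ext (cosecHom_ext fun x a => ?_)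
    show cosecMap (φ + ψ) (cosecMk F x a) = (cosecMap φ + cosecMap ψ) (cosecMk F x a)
    rw [AddMonoidHom.add_apply, cosecMap_mk, cosecMap_mk, cosecMap_mk]
    show cosecMk G x ((φ.app (pt x) + ψ.app (pt x)).hom a) = _
    rw [AddCommGrpCat.hom_add, AddMonoidHom.add_apply, map_add]
end core

section restriction
variable {X : Type} [TopologicalSpace X]

/-- The inclusion of a subspace, as a functor between specialization preorders. -/
def inc (S : Set X) : Specialization ↥S ⥤ Specialization X :=
  (Specialization.map ⟨(Subtype.val : S → X), continuous_subtype_val⟩).monotone.functor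

/-- Restriction of abelian data to a subspace. -/
def restr (S : Set X) : AbData X ⥤ AbData ↥S := (Functor.whiskeringLeft _ _ _).obj (inc S)

lemma subtype_pt_le_iff {S : Set X} (a b : ↥S) : pt a ≤ pt b ↔ pt (a : X) ≤ pt (b : X) := by
  rw [Specialization.toEquiv_le_toEquiv, Specialization.toEquiv_le_toEquiv]
  exact (subtype_specializes_iff b a).trans Iff.rfl

lemma data_map_eq (F : AbData X) {p q : Specialization X} (h h' : p ⟶ q) : F.map h = F.map h' := by
  congr 1
  apply Subsingleton.elim

/-- Sections of `F` over the subspace `S`: `Γ(S,F)`. -/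
noncomputable def secGrpOn (S : Set X) (F : AbData X) : AddCommGrpCat.{0} :=
  (secFunctor ↥S).obj ((restr S).obj F)

/-- Cosections of `F` over the subspace `S`: `L(S,F)`. -/
noncomputable def cosecGrpOn (S : Set X) (F : AbData X) : AddCommGrpCat.{0} :=
  (cosecFunctor ↥S).obj ((restr S).obj F)

/-- Restriction of sections along an inclusion of subspaces `T ⊆ S`. -/
noncomputable def secResOn (F : AbData X) {S T : Set X} (hTS : T ⊆ S) :
    secGrpOn S F →+ secGrpOn T F where
  toFun u := (⟨fun x => u.1 ⟨x.1, hTS x.2⟩, by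
    intro x y h
    have hS : pt (⟨x.1, hTS x.2⟩ : ↥S) ≤ pt (⟨y.1, hTS y.2⟩ : ↥S) := by
      rw [subtype_pt_le_iff]
      exact (subtype_pt_le_iff x y).mp h
    have hu := u.2 ⟨x.1, hTS x.2⟩ ⟨y.1, hTS y.2⟩ hS
    have heq : ((restr T).obj F).map (homOfLE h) = ((restr S).obj F).map (homOfLE hS) :=
      data_map_eq F _ _
    rw [heq]
    exact hu⟩ : compatSections ((restr T).obj F))
  map_zero' := rfl
  map_add' u v := rfl

noncomputable def cosecExtAux (F : AbData X) {S T : Set X} (hST : S ⊆ T) :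
    DirectSum ↥S (stalk ((restr S).obj F)) →+ cosecGrp ((restr T).obj F) :=
  letI := Classical.decEq ↥S
  DirectSum.toAddMonoid (fun x => cosecMk ((restr T).obj F) ⟨x.1, hST x.2⟩)

lemma cosecExtAux_of (F : AbData X) {S T : Set X} (hST : S ⊆ T) (x : ↥S)
    (a : stalk ((restr S).obj F) x) :
    cosecExtAux F hST (cosecOf ((restr S).obj F) x a)
      = cosecMk ((restr T).obj F) ⟨x.1, hST x.2⟩ a := by
  letI := Classical.decEq ↥S
  exact DirectSum.toAddMonoid_of _ _ _

/-- Extension of cosections along an inclusion of subspaces `S ⊆ T`. -/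
noncomputable def cosecExtOn (F : AbData X) {S T : Set X} (hST : S ⊆ T) :
    cosecGrp ((restr S).obj F) →+ cosecGrp ((restr T).obj F) := by
  refine QuotientAddGroup.lift _ (cosecExtAux F hST) ?_
  rw [cosecRel, AddSubgroup.closure_le]
  rintro w ⟨x, y, h, a, rfl⟩
  have hT : pt (⟨x.1, hST x.2⟩ : ↥T) ≤ pt (⟨y.1, hST y.2⟩ : ↥T) := by
    rw [subtype_pt_le_iff]; exact (subtype_pt_le_iff x y).mp h
  have heq : ((restr S).obj F).map (homOfLE h) = ((restr T).obj F).map (homOfLE hT) :=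
    data_map_eq F _ _
  rw [SetLike.mem_coe, AddMonoidHom.mem_ker, map_sub, heq, cosecExtAux_of, cosecExtAux_of]
  show (QuotientAddGroup.mk' _) _ - (QuotientAddGroup.mk' _) _ = 0
  erw [← map_sub]
  exact (QuotientAddGroup.eq_zero_iff _).mpr
    (AddSubgroup.subset_closure ⟨⟨x.1, hST x.2⟩, ⟨y.1, hST y.2⟩, hT, a, rfl⟩)

lemma cosecExtOn_mk (F : AbData X) {S T : Set X} (hST : S ⊆ T) (x : ↥S)
    (a : stalk ((restr S).obj F) x) :
    cosecExtOn F hST (cosecMk ((restr S).obj F) x a)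
      = cosecMk ((restr T).obj F) ⟨x.1, hST x.2⟩ a := cosecExtAux_of F hST x a

end restriction

section spaces
variable {X : Type} [TopologicalSpace X]

/-- The minimal open subset containing a point (of a finite space). -/
def minOpen (x : X) : Set X := ⋂₀ {U : Set X | IsOpen U ∧ x ∈ U}

lemma isOpen_minOpen [Finite X] (x : X) : IsOpen (minOpen x) :=
  Set.Finite.isOpen_sInter (Set.toFinite _) (fun _ hU => hU.1)

lemma mem_minOpen_self (x : X) : x ∈ minOpen x := fun _ hU => hU.2

lemma mem_minOpen_iff {x z : X} : z ∈ minOpen x ↔ pt x ≤ pt z := by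
  rw [Specialization.toEquiv_le_toEquiv, specializes_iff_forall_open]
  constructor
  · intro hz s hs hx
    exact hz s ⟨hs, hx⟩
  · intro h U hU
    exact h U hU.1 hU.2

lemma mem_closure_iff_pt_le {x z : X} : z ∈ closure ({x} : Set X) ↔ pt z ≤ pt x := by
  rw [Specialization.toEquiv_le_toEquiv, specializes_iff_mem_closure]

lemma minOpen_anti {y y' : X} (h : pt y ≤ pt y') : minOpen y' ⊆ minOpen y := by
  intro z hz
  rw [mem_minOpen_iff] at hz ⊢
  exact le_trans h hz

lemma closure_singleton_mono {y y' : X} (h : pt y ≤ pt y') :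
    closure ({y} : Set X) ⊆ closure ({y'} : Set X) := by
  intro z hz
  rw [mem_closure_iff_pt_le] at hz ⊢
  exact le_trans hz h
end spaces

section directimages
variable {X Y : Type} [TopologicalSpace X] [TopologicalSpace Y]

/-- Restriction of global sections to sections over a subspace. -/
noncomputable def secResToSub (F : AbData X) (S : Set X) :
    (secFunctor X).obj F →+ secGrpOn S F where
  toFun u := (⟨fun x => u.1 x.1, by
    intro x y h
    have hX : pt (x : X) ≤ pt (y : X) := (subtype_pt_le_iff x y).mp h
    have hu := u.2 x.1 y.1 hX
    have heq : ((restr S).obj F).map (homOfLE h) = F.map (homOfLE hX) := data_map_eq F _ _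
    rw [heq]
    exact hu⟩ : compatSections ((restr S).obj F))
  map_zero' := rfl
  map_add' u v := rfl

noncomputable def cosecFromSubAux (F : AbData X) (S : Set X) :
    DirectSum ↥S (stalk ((restr S).obj F)) →+ cosecGrp F :=
  letI := Classical.decEq ↥S
  DirectSum.toAddMonoid (fun x => cosecMk F x.1)

lemma cosecFromSubAux_of (F : AbData X) (S : Set X) (x : ↥S)
    (a : stalk ((restr S).obj F) x) :
    cosecFromSubAux F S (cosecOf ((restr S).obj F) x a) = cosecMk F x.1 a := by
  letI := Classical.decEq ↥S
  exact DirectSum.toAddMonoid_of _ _ _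

/-- Extension of cosections over a subspace to global cosections. -/
noncomputable def cosecExtFromSub (F : AbData X) (S : Set X) :
    cosecGrp ((restr S).obj F) →+ cosecGrp F := by
  refine QuotientAddGroup.lift _ (cosecFromSubAux F S) ?_
  rw [cosecRel, AddSubgroup.closure_le]
  rintro w ⟨x, y, h, a, rfl⟩
  have hX : pt (x : X) ≤ pt (y : X) := (subtype_pt_le_iff x y).mp h
  have heq : ((restr S).obj F).map (homOfLE h) = F.map (homOfLE hX) := data_map_eq F _ _
  rw [SetLike.mem_coe, AddMonoidHom.mem_ker, map_sub, heq, cosecFromSubAux_of,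
    cosecFromSubAux_of]
  show (QuotientAddGroup.mk' _) _ - (QuotientAddGroup.mk' _) _ = 0
  erw [← map_sub]
  exact (QuotientAddGroup.eq_zero_iff _).mpr
    (AddSubgroup.subset_closure ⟨x.1, y.1, hX, a, rfl⟩)

lemma cosecExtFromSub_mk (F : AbData X) (S : Set X) (x : ↥S)
    (a : stalk ((restr S).obj F) x) :
    cosecExtFromSub F S (cosecMk ((restr S).obj F) x a) = cosecMk F x.1 a :=
  cosecFromSubAux_of F S x a

/-- An abelian data is flasque if all restrictions to open subsets are surjective. -/
def Flasque (F : AbData X) : Prop :=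
  ∀ U : Set X, IsOpen U → Function.Surjective (secResToSub F U)

/-- An abelian data is coflasque if all extensions from closed subsets are injective. -/
def Coflasque (F : AbData X) : Prop :=
  ∀ C : Set X, IsClosed C → Function.Injective (cosecExtFromSub F C)

/-- The inverse image functor `f⁻¹`. -/
def invIm (f : C(X, Y)) : AbData Y ⥤ AbData X :=
  (Functor.whiskeringLeft _ _ _).obj (Specialization.map f).monotone.functor

/-- The direct image functor `f_*`, defined stalkwise by `(f_* F)_y = Γ(f⁻¹(U_y), F)`. -/
noncomputable def pushforward (f : C(X, Y)) : AbData X ⥤ AbData Y where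
  obj F :=
    { obj := fun y => secGrpOn (f ⁻¹' minOpen (Specialization.ofEquiv y)) F
      map := fun {y y'} h => AddCommGrpCat.ofHom <| secResOn F (Set.preimage_mono (minOpen_anti (leOfHom h)))
      map_id := fun y => by apply AddCommGrpCat.hom_ext; apply AddMonoidHom.ext; intro u; apply Subtype.ext; rfl
      map_comp := fun h1 h2 => by apply AddCommGrpCat.hom_ext; apply AddMonoidHom.ext; intro u; apply Subtype.ext; rfl }
  map {F G} φ :=
    { app := fun y => (secFunctor _).map ((restr _).map φ)
      naturality := fun y y' h => by apply AddCommGrpCat.hom_ext; apply AddMonoidHom.ext; intro u; apply Subtype.ext; rfl }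
  map_id F := by
    apply NatTrans.ext; funext y; apply AddCommGrpCat.hom_ext; apply AddMonoidHom.ext; intro u; apply Subtype.ext; rfl
  map_comp φ ψ := by
    apply NatTrans.ext; funext y; apply AddCommGrpCat.hom_ext; apply AddMonoidHom.ext; intro u; apply Subtype.ext; rfl

lemma cosecExtOn_refl (F : AbData X) {S : Set X} (h : S ⊆ S) :
    cosecExtOn F h = AddMonoidHom.id (cosecGrp ((restr S).obj F)) := by
  refine cosecHom_ext fun x a => ?_
  rw [cosecExtOn_mk]
  rfl

lemma cosecExtOn_trans (F : AbData X) {S T V : Set X} (h1 : S ⊆ T) (h2 : T ⊆ V)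
    (h3 : S ⊆ V) :
    cosecExtOn F h3 = (cosecExtOn F h2).comp (cosecExtOn F h1) := by
  refine cosecHom_ext fun x a => ?_
  rw [cosecExtOn_mk, AddMonoidHom.comp_apply, cosecExtOn_mk]
  exact (cosecExtOn_mk F h2 ⟨x.1, h1 x.2⟩ a).symm

lemma cosecExtOn_natural {F G : AbData X} (φ : F ⟶ G) {S T : Set X} (h : S ⊆ T) :
    (cosecMap ((restr T).map φ)).comp (cosecExtOn F h)
      = (cosecExtOn G h).comp (cosecMap ((restr S).map φ)) := by
  refine cosecHom_ext fun x a => ?_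
  rw [AddMonoidHom.comp_apply, AddMonoidHom.comp_apply, cosecExtOn_mk]
  exact (cosecMap_mk ((restr T).map φ) ⟨x.1, h x.2⟩ a).trans ((cosecExtOn_mk G h x _).symm.trans
    (congrArg (cosecExtOn G h) (cosecMap_mk ((restr S).map φ) x a).symm))

/-- The stalk of `f_! F`: cosections over `f⁻¹(C_y)`. -/
noncomputable def shriekObj (f : C(X, Y)) (F : AbData X) : AbData Y where
  obj y := cosecGrpOn (f ⁻¹' closure {Specialization.ofEquiv y}) F
  map {y y'} h := AddCommGrpCat.ofHom <| cosecExtOn F (Set.preimage_mono (closure_singleton_mono (leOfHom h)))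
  map_id y := AddCommGrpCat.hom_ext <| cosecExtOn_refl F _
  map_comp {y₁ y₂ y₃} h1 h2 := AddCommGrpCat.hom_ext <| cosecExtOn_trans F _ _ _

/-- The codirect image functor `f_!`, defined stalkwise by `(f_! F)_y = L(f⁻¹(C_y), F)`. -/
noncomputable def shriek (f : C(X, Y)) : AbData X ⥤ AbData Y where
  obj F := shriekObj f F
  map {F G} φ :=
    { app := fun y => (cosecFunctor _).map ((restr _).map φ)
      naturality := fun y y' h => AddCommGrpCat.hom_ext <| cosecExtOn_natural φ _ }
  map_id F := by
    refine NatTrans.ext (funext fun y => ?_)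
    show (cosecFunctor _).map ((restr _).map (𝟙 F)) = _
    rw [CategoryTheory.Functor.map_id, CategoryTheory.Functor.map_id]
    rfl
  map_comp φ ψ := by
    refine NatTrans.ext (funext fun y => ?_)
    show (cosecFunctor _).map ((restr _).map (φ ≫ ψ)) = _
    rw [CategoryTheory.Functor.map_comp, CategoryTheory.Functor.map_comp]
    rfl
end directimages

instance pushforwardAdditive {X Y : Type} [TopologicalSpace X] [TopologicalSpace Y]
    (f : C(X, Y)) : (pushforward f).Additive where
  map_add := by
    intro F G φ ψ
    refine NatTrans.ext (funext fun y => ?_)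
    apply AddCommGrpCat.hom_ext; apply AddMonoidHom.ext; intro u; apply Subtype.ext; funext x
    rfl

instance shriekAdditive {X Y : Type} [TopologicalSpace X] [TopologicalSpace Y]
    (f : C(X, Y)) : (shriek f).Additive where
  map_add := by
    intro F G φ ψ
    refine NatTrans.ext (funext fun y => ?_)
    refine AddCommGrpCat.hom_ext (cosecHom_ext fun x a => ?_)
    show cosecMap ((restr _).map (φ + ψ)) (cosecMk _ x a)
      = cosecMap ((restr _).map φ) (cosecMk _ x a) + cosecMap ((restr _).map ψ) (cosecMk _ x a)
    rw [cosecMap_mk, cosecMap_mk, cosecMap_mk]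
    exact map_add _ _ _

/-! ### Auxiliary lemmas for Statement 17 -/

noncomputable def surjFactor {M N P : Type*} [AddCommGroup M] [AddCommGroup N] [AddCommGroup P]
    (f : M →+ N) (hf : Function.Surjective f) (g : M →+ P)
    (hg : ∀ m, f m = 0 → g m = 0) : N →+ P :=
  (QuotientAddGroup.lift f.ker g
      (fun m hm => hg m (AddMonoidHom.mem_ker.mp hm))).comp
    (QuotientAddGroup.quotientKerEquivOfSurjective f hf).symm.toAddMonoidHom

lemma surjFactor_apply {M N P : Type*} [AddCommGroup M] [AddCommGroup N] [AddCommGroup P]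
    (f : M →+ N) (hf : Function.Surjective f) (g : M →+ P)
    (hg : ∀ m, f m = 0 → g m = 0) (m : M) :
    surjFactor f hf g hg (f m) = g m := by
  unfold surjFactor
  rw [AddMonoidHom.comp_apply]
  have h1 : (QuotientAddGroup.quotientKerEquivOfSurjective f hf).symm (f m)
      = QuotientAddGroup.mk m := by
    apply (QuotientAddGroup.quotientKerEquivOfSurjective f hf).injective
    rw [AddEquiv.apply_symm_apply]
    simp [QuotientAddGroup.quotientKerEquivOfSurjective]
  rw [AddEquiv.toAddMonoidHom_eq_coe, AddMonoidHom.coe_coe, h1]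
  exact QuotientAddGroup.lift_mk' _ _ _

section aux17a
variable {Z : Type} [TopologicalSpace Z]

lemma cosecMk_rel (G : AbData Z) {a b : Z} (h : pt a ≤ pt b) (c : stalk G a) :
    cosecMk G b (G.map (homOfLE h) c) = cosecMk G a c := by
  have hz : cosecMk G b (G.map (homOfLE h) c) - cosecMk G a c = 0 := by
    show (QuotientAddGroup.mk' (cosecRel G)) (cosecOf G b (G.map (homOfLE h) c))
      - (QuotientAddGroup.mk' (cosecRel G)) (cosecOf G a c) = 0
    rw [← map_sub]
    exact (QuotientAddGroup.eq_zero_iff _).mpr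
      (AddSubgroup.subset_closure ⟨a, b, h, c, rfl⟩)
  exact sub_eq_zero.mp hz

lemma mk_cosecOf (G : AbData Z) [inst : DecidableEq Z] (x : Z) (b : stalk G x) :
    ((DirectSum.of (stalk G) x b : DirectSum Z (stalk G)) :
      DirectSum Z (stalk G) ⧸ cosecRel G) = cosecMk G x b := by
  have h : @DirectSum.of Z (stalk G) _ inst x = cosecOf G x := by
    rw [Subsingleton.elim inst (Classical.decEq Z)]
    rfl
  rw [h]
  rfl

lemma cosecMap_comp_zero {A B C : AbData Z} (φ : A ⟶ B) (ψ : B ⟶ C)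
    (h : ∀ (q : Specialization Z) (b : A.obj q), ψ.app q (φ.app q b) = 0)
    (z : cosecGrp A) : cosecMap ψ (cosecMap φ z) = 0 := by
  have hh : (cosecMap ψ).comp (cosecMap φ) = (0 : cosecGrp A →+ cosecGrp C) := by
    refine cosecHom_ext fun x a => ?_
    show cosecMap ψ (cosecMap φ (cosecMk A x a)) = (0 : cosecGrp A →+ cosecGrp C) (cosecMk A x a)
    rw [cosecMap_mk, cosecMap_mk, h, map_zero, AddMonoidHom.zero_apply]
  exact DFunLike.congr_fun hh z

lemma cosecMap_surjective {B C : AbData Z} (ψ : B ⟶ C)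
    (hs : ∀ q : Specialization Z, Function.Surjective (ψ.app q)) :
    Function.Surjective (cosecMap ψ) := by
  classical
  intro z
  refine QuotientAddGroup.induction_on z fun w => ?_
  refine DirectSum.induction_on w ⟨0, by simp; rfl⟩ ?_ ?_
  · intro x c
    obtain ⟨b, hb⟩ := hs (pt x) c
    exact ⟨cosecMk B x b, by rw [cosecMap_mk, hb]; rfl⟩
  · rintro w₁ w₂ ⟨y₁, hy₁⟩ ⟨y₂, hy₂⟩
    exact ⟨y₁ + y₂, by rw [map_add, hy₁, hy₂]; rfl⟩

lemma cosecMap_exact_mid {A B C : AbData Z} (φ : A ⟶ B) (ψ : B ⟶ C)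
    (hs : ∀ q : Specialization Z, Function.Surjective (ψ.app q))
    (hx : ∀ q : Specialization Z, Function.Exact (φ.app q) (ψ.app q))
    (z : cosecGrp B) (hz : cosecMap ψ z = 0) : z ∈ Set.range (cosecMap φ) := by
  classical
  set W : AddSubgroup (cosecGrp B) := (cosecMap φ).range with hW
  let mkQ : cosecGrp B →+ cosecGrp B ⧸ W := QuotientAddGroup.mk' W
  have hker : ∀ (x : Z) (b : B.obj (pt x)), ψ.app (pt x) b = 0 → mkQ (cosecMk B x b) = 0 := by
    intro x b hb
    obtain ⟨a, rfl⟩ := (hx (pt x) b).mp hb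
    rw [← cosecMap_mk φ x a]
    exact (QuotientAddGroup.eq_zero_iff _).mpr ⟨cosecMk A x a, rfl⟩
  let s : ∀ x : Z, C.obj (pt x) →+ cosecGrp B ⧸ W := fun x =>
    surjFactor (ψ.app (pt x)).hom (hs (pt x)) (mkQ.comp (cosecMk B x)) (hker x)
  have hs_apply : ∀ (x : Z) (b : B.obj (pt x)), s x (ψ.app (pt x) b) = mkQ (cosecMk B x b) :=
    fun x b => surjFactor_apply (ψ.app (pt x)).hom (hs (pt x)) (mkQ.comp (cosecMk B x)) (hker x) b
  let Stot : DirectSum Z (stalk C) →+ cosecGrp B ⧸ W := DirectSum.toAddMonoid s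
  have hStot_of : ∀ (x : Z) (c : stalk C x), Stot (cosecOf C x c) = s x c := by
    intro x c
    simp [Stot, cosecOf, DirectSum.toAddMonoid_of]
  have hrel : cosecRel C ≤ Stot.ker := by
    rw [cosecRel, AddSubgroup.closure_le]
    rintro w ⟨x, y, h, c, rfl⟩
    rw [SetLike.mem_coe, AddMonoidHom.mem_ker, map_sub, hStot_of, hStot_of]
    obtain ⟨b, rfl⟩ := hs (pt x) c
    rw [naturality_apply ψ (homOfLE h) b, hs_apply, hs_apply, cosecMk_rel B h b, sub_self]
  let S : cosecGrp C →+ cosecGrp B ⧸ W := QuotientAddGroup.lift (cosecRel C) Stot hrel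
  have hSz : ∀ zz : cosecGrp B, S (cosecMap ψ zz) = mkQ zz := by
    have hh : S.comp (cosecMap ψ) = mkQ := by
      refine cosecHom_ext fun x b => ?_
      show S (cosecMap ψ (cosecMk B x b)) = mkQ (cosecMk B x b)
      rw [cosecMap_mk]
      show Stot (cosecOf C x (ψ.app (pt x) b)) = mkQ (cosecMk B x b)
      rw [hStot_of, hs_apply]
    exact fun zz => DFunLike.congr_fun hh zz
  have : mkQ z = 0 := by rw [← hSz z, hz, map_zero]
  exact (QuotientAddGroup.eq_zero_iff _).mp this

end aux17a

section aux17b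
variable {X : Type} [TopologicalSpace X]

noncomputable def tauBarAux (G : AbData X) (x₀ : X) (S : Set X)
    (hS : ∀ y : ↥S, pt (y : X) ≤ pt x₀) :
    DirectSum ↥S (stalk ((restr S).obj G)) →+ G.obj (pt x₀) :=
  letI := Classical.decEq ↥S
  DirectSum.toAddMonoid (fun y => ((G.map (homOfLE (hS y))).hom : G.obj (pt (y : X)) →+ G.obj (pt x₀)))

lemma tauBarAux_of (G : AbData X) (x₀ : X) (S : Set X)
    (hS : ∀ y : ↥S, pt (y : X) ≤ pt x₀) (y : ↥S) (b : stalk ((restr S).obj G) y) :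
    tauBarAux G x₀ S hS (cosecOf ((restr S).obj G) y b) = G.map (homOfLE (hS y)) b := by
  letI := Classical.decEq ↥S
  exact DirectSum.toAddMonoid_of _ _ _

noncomputable def tauBar (G : AbData X) (x₀ : X) (S : Set X)
    (hS : ∀ y : ↥S, pt (y : X) ≤ pt x₀) :
    cosecGrp ((restr S).obj G) →+ G.obj (pt x₀) := by
  refine QuotientAddGroup.lift _ (tauBarAux G x₀ S hS) ?_
  rw [cosecRel, AddSubgroup.closure_le]
  rintro w ⟨y, y', h, b, rfl⟩
  have hXY : pt (y : X) ≤ pt (y' : X) := (subtype_pt_le_iff y y').mp h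
  rw [SetLike.mem_coe, AddMonoidHom.mem_ker, map_sub, tauBarAux_of, tauBarAux_of, sub_eq_zero]
  show G.map (homOfLE (hS y')) (G.map (homOfLE hXY) b) = G.map (homOfLE (hS y)) b
  exact congrArg (fun f => f.hom b)
    ((Functor.map_comp G _ _).symm.trans (data_map_eq G (homOfLE hXY ≫ homOfLE (hS y')) (homOfLE (hS y))))

lemma tauBar_mk (G : AbData X) (x₀ : X) (S : Set X)
    (hS : ∀ y : ↥S, pt (y : X) ≤ pt x₀) (y : ↥S) (b : stalk ((restr S).obj G) y) :
    tauBar G x₀ S hS (cosecMk ((restr S).obj G) y b) = G.map (homOfLE (hS y)) b :=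
  tauBarAux_of G x₀ S hS y b

lemma tauBar_natural {F G : AbData X} (φ : F ⟶ G) (x₀ : X) (S : Set X)
    (hS : ∀ y : ↥S, pt (y : X) ≤ pt x₀) (z : cosecGrp ((restr S).obj F)) :
    tauBar G x₀ S hS (cosecMap ((restr S).map φ) z)
      = φ.app (pt x₀) (tauBar F x₀ S hS z) := by
  have hh : (tauBar G x₀ S hS).comp (cosecMap ((restr S).map φ))
      = (((φ.app (pt x₀)).hom : F.obj (pt x₀) →+ G.obj (pt x₀))).comp (tauBar F x₀ S hS) := by
    refine cosecHom_ext fun y b => ?_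
    rw [AddMonoidHom.comp_apply, AddMonoidHom.comp_apply, cosecMap_mk, tauBar_mk, tauBar_mk]
    exact naturality_apply φ (homOfLE (hS y)) b
  exact DFunLike.congr_fun hh z

lemma extFromSub_factor (F : AbData X) {S T : Set X} (h : S ⊆ T) :
    (cosecExtFromSub F T).comp (cosecExtOn F h) = cosecExtFromSub F S :=
  cosecHom_ext fun x a => by
    rw [AddMonoidHom.comp_apply, cosecExtOn_mk]
    exact (cosecExtFromSub_mk F T ⟨x.1, h x.2⟩ a).trans (cosecExtFromSub_mk F S x a).symm

/-- The canonical map `L(X,F) → L(univ,F)`. -/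
noncomputable def toUnivAux (F : AbData X) :
    DirectSum X (stalk F) →+ cosecGrp ((restr (Set.univ : Set X)).obj F) :=
  letI := Classical.decEq X
  DirectSum.toAddMonoid fun x => cosecMk ((restr (Set.univ : Set X)).obj F) ⟨x, trivial⟩

lemma toUnivAux_of (F : AbData X) (x : X) (a : stalk F x) :
    toUnivAux F (cosecOf F x a) = cosecMk ((restr (Set.univ : Set X)).obj F) ⟨x, trivial⟩ a := by
  letI := Classical.decEq X
  exact DirectSum.toAddMonoid_of _ _ _

noncomputable def toUniv (F : AbData X) :
    cosecGrp F →+ cosecGrp ((restr (Set.univ : Set X)).obj F) := by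
  refine QuotientAddGroup.lift _ (toUnivAux F) ?_
  rw [cosecRel, AddSubgroup.closure_le]
  rintro w ⟨x, y, h, a, rfl⟩
  have h' : pt (⟨x, trivial⟩ : ↥(Set.univ : Set X)) ≤ pt (⟨y, trivial⟩ : ↥(Set.univ : Set X)) :=
    (subtype_pt_le_iff _ _).mpr h
  rw [SetLike.mem_coe, AddMonoidHom.mem_ker, map_sub, toUnivAux_of, toUnivAux_of, sub_eq_zero]
  exact cosecMk_rel ((restr (Set.univ : Set X)).obj F) h' a

lemma toUniv_mk (F : AbData X) (x : X) (a : stalk F x) :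
    toUniv F (cosecMk F x a) = cosecMk ((restr (Set.univ : Set X)).obj F) ⟨x, trivial⟩ a :=
  toUnivAux_of F x a

lemma toUniv_natural {F G : AbData X} (φ : F ⟶ G) (z : cosecGrp F) :
    toUniv G (cosecMap φ z) = cosecMap ((restr (Set.univ : Set X)).map φ) (toUniv F z) := by
  have hh : (toUniv G).comp (cosecMap φ)
      = (cosecMap ((restr (Set.univ : Set X)).map φ)).comp (toUniv F) := by
    refine cosecHom_ext fun x a => ?_
    rw [AddMonoidHom.comp_apply, AddMonoidHom.comp_apply, cosecMap_mk, toUniv_mk, toUniv_mk]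
    exact (cosecMap_mk ((restr (Set.univ : Set X)).map φ) ⟨x, trivial⟩ a).symm
  exact DFunLike.congr_fun hh z

lemma extFromSub_toUniv (F : AbData X) (z : cosecGrp F) :
    cosecExtFromSub F Set.univ (toUniv F z) = z := by
  have hh : (cosecExtFromSub F Set.univ).comp (toUniv F) = AddMonoidHom.id _ := by
    refine cosecHom_ext fun x a => ?_
    rw [AddMonoidHom.comp_apply, toUniv_mk]
    exact cosecExtFromSub_mk F Set.univ ⟨x, trivial⟩ a
  exact DFunLike.congr_fun hh z

/- Order-topology helpers. -/

lemma mem_of_closed_le {C : Set X} (hC : IsClosed C) {y z : X} (hy : y ∈ C)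
    (hzy : pt z ≤ pt y) : z ∈ C := by
  have h1 : z ∈ closure ({y} : Set X) := mem_closure_iff_pt_le.mpr hzy
  have h2 : closure ({y} : Set X) ⊆ C :=
    hC.closure_subset_iff.mpr (Set.singleton_subset_iff.mpr hy)
  exact h2 h1

lemma isClosed_of_down [Finite X] {S : Set X}
    (h : ∀ y ∈ S, ∀ z : X, pt z ≤ pt y → z ∈ S) : IsClosed S := by
  have hS : S = ⋃ y ∈ S, closure {y} := by
    ext z
    simp only [Set.mem_iUnion]
    constructor
    · intro hz; exact ⟨z, hz, subset_closure rfl⟩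
    · rintro ⟨y, hy, hz⟩; exact h y hy z (mem_closure_iff_pt_le.mp hz)
  rw [hS]
  exact Set.Finite.isClosed_biUnion (Set.toFinite _) fun _ _ => isClosed_closure

lemma exists_pt_max [Finite X] {C : Set X} (hC : C.Nonempty) :
    ∃ x₀ ∈ C, ∀ y ∈ C, pt x₀ ≤ pt y → pt y ≤ pt x₀ := by
  obtain ⟨a, haC, hmax⟩ := Set.Finite.exists_maximalFor
    (fun y => (closure ({y} : Set X)).ncard) C (Set.toFinite C) hC
  refine ⟨a, haC, fun y hy hle => ?_⟩
  have hsub : closure ({a} : Set X) ⊆ closure {y} := closure_singleton_mono hle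
  have hcard : (closure ({a} : Set X)).ncard ≤ (closure ({y} : Set X)).ncard :=
    Set.ncard_le_ncard hsub (Set.toFinite _)
  have heq := hmax hy hcard
  have hset : closure ({a} : Set X) = closure ({y} : Set X) :=
    Set.eq_of_subset_of_ncard_le hsub heq (Set.toFinite _)
  exact mem_closure_iff_pt_le.mp (hset ▸ (subset_closure rfl : y ∈ closure ({y} : Set X)))

end aux17b

section aux17c
variable {X : Type} [TopologicalSpace X]

def subC0 (C : Set X) (x₀ : X) : Set X := {y ∈ C | ¬ pt x₀ ≤ pt y}
def subY0 (C : Set X) (x₀ : X) : Set X := {y ∈ subC0 C x₀ | pt y ≤ pt x₀}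

lemma subC0_subset (C : Set X) (x₀ : X) : subC0 C x₀ ⊆ C := fun _ h => h.1
lemma subY0_subset (C : Set X) (x₀ : X) : subY0 C x₀ ⊆ subC0 C x₀ := fun _ h => h.1
lemma subY0_le (C : Set X) (x₀ : X) : ∀ y : ↥(subY0 C x₀), pt (y : X) ≤ pt x₀ := fun y => y.2.2

lemma phi_surj (G : AbData X) (C : Set X) (x₀ : X) (hx₀ : x₀ ∈ C)
    (hmax : ∀ y ∈ C, pt x₀ ≤ pt y → pt y ≤ pt x₀)
    (z : cosecGrp ((restr C).obj G)) :
    ∃ (u : cosecGrp ((restr (subC0 C x₀)).obj G)) (a : G.obj (pt x₀)),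
      z = cosecExtOn G (subC0_subset C x₀) u
        + cosecMk ((restr C).obj G) ⟨x₀, hx₀⟩ a := by
  classical
  refine QuotientAddGroup.induction_on z fun w => ?_
  refine DirectSum.induction_on w ⟨0, 0, by simp; exact (map_zero _).symm⟩ ?_ ?_
  · intro x b
    by_cases hxT : pt x₀ ≤ pt (x : X)
    · have hle : pt (x : X) ≤ pt x₀ := hmax x.1 x.2 hxT
      refine ⟨0, G.map (homOfLE hle) b, ?_⟩
      rw [map_zero, zero_add, mk_cosecOf]
      have h' : pt x ≤ pt (⟨x₀, hx₀⟩ : ↥C) := (subtype_pt_le_iff _ _).mpr hle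
      exact (cosecMk_rel ((restr C).obj G) h' b).symm
    · refine ⟨cosecMk ((restr (subC0 C x₀)).obj G) ⟨x.1, x.2, hxT⟩ b, 0, ?_⟩
      have e1 := cosecExtOn_mk G (subC0_subset C x₀) ⟨x.1, x.2, hxT⟩ b
      have e2 : cosecMk ((restr C).obj G) ⟨x₀, hx₀⟩ (0 : G.obj (pt x₀)) = 0 := map_zero _
      rw [e2, add_zero]
      exact (mk_cosecOf _ x b).trans e1.symm
  · rintro w₁ w₂ ⟨u₁, a₁, h₁⟩ ⟨u₂, a₂, h₂⟩
    refine ⟨u₁ + u₂, a₁ + a₂, ?_⟩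
    have e : cosecMk ((restr C).obj G) ⟨x₀, hx₀⟩ (a₁ + a₂ : G.obj (pt x₀))
        = cosecMk ((restr C).obj G) ⟨x₀, hx₀⟩ a₁ + cosecMk ((restr C).obj G) ⟨x₀, hx₀⟩ a₂ :=
      map_add _ _ _
    rw [QuotientAddGroup.mk_add, h₁, h₂, map_add, e]
    abel

noncomputable def klDelta (G : AbData X) (C : Set X) (x₀ : X) :
    cosecGrp ((restr (subY0 C x₀)).obj G) →+
      cosecGrp ((restr (subC0 C x₀)).obj G) × G.obj (pt x₀) :=
  (cosecExtOn G (subY0_subset C x₀)).prod (-(tauBar G x₀ (subY0 C x₀) (subY0_le C x₀)))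

lemma klDelta_apply (G : AbData X) (C : Set X) (x₀ : X) (v : cosecGrp ((restr (subY0 C x₀)).obj G)) :
    klDelta G C x₀ v = (cosecExtOn G (subY0_subset C x₀) v,
      -(tauBar G x₀ (subY0 C x₀) (subY0_le C x₀) v)) := rfl

noncomputable def klPsiStalk (G : AbData X) (C : Set X) (x₀ : X)
    (hmax : ∀ y ∈ C, pt x₀ ≤ pt y → pt y ≤ pt x₀) (x : ↥C) :
    stalk ((restr C).obj G) x →+
      (cosecGrp ((restr (subC0 C x₀)).obj G) × G.obj (pt x₀)) ⧸ (klDelta G C x₀).range :=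
  letI := Classical.dec (pt x₀ ≤ pt (x : X))
  if hxT : pt x₀ ≤ pt (x : X) then
    (QuotientAddGroup.mk' _).comp ((AddMonoidHom.inr _ _).comp
      (G.map (homOfLE (hmax x.1 x.2 hxT))).hom)
  else
    (QuotientAddGroup.mk' _).comp ((AddMonoidHom.inl _ _).comp
      (cosecMk ((restr (subC0 C x₀)).obj G) ⟨x.1, x.2, hxT⟩))

lemma klPsiStalk_pos (G : AbData X) (C : Set X) (x₀ : X)
    (hmax : ∀ y ∈ C, pt x₀ ≤ pt y → pt y ≤ pt x₀) (x : ↥C)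
    (hxT : pt x₀ ≤ pt (x : X)) (b : stalk ((restr C).obj G) x) :
    klPsiStalk G C x₀ hmax x b = QuotientAddGroup.mk' (klDelta G C x₀).range
      (0, G.map (homOfLE (hmax x.1 x.2 hxT)) b) := by
  unfold klPsiStalk
  rw [dif_pos hxT]
  rfl

lemma klPsiStalk_neg (G : AbData X) (C : Set X) (x₀ : X)
    (hmax : ∀ y ∈ C, pt x₀ ≤ pt y → pt y ≤ pt x₀) (x : ↥C)
    (hxT : ¬ pt x₀ ≤ pt (x : X)) (b : stalk ((restr C).obj G) x) :
    klPsiStalk G C x₀ hmax x b = QuotientAddGroup.mk' (klDelta G C x₀).range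
      (cosecMk ((restr (subC0 C x₀)).obj G) ⟨x.1, x.2, hxT⟩ b, 0) := by
  unfold klPsiStalk
  rw [dif_neg hxT]
  rfl

noncomputable def klPsiAux (G : AbData X) (C : Set X) (x₀ : X)
    (hmax : ∀ y ∈ C, pt x₀ ≤ pt y → pt y ≤ pt x₀) :
    DirectSum ↥C (stalk ((restr C).obj G)) →+
      (cosecGrp ((restr (subC0 C x₀)).obj G) × G.obj (pt x₀)) ⧸ (klDelta G C x₀).range :=
  letI := Classical.decEq ↥C
  DirectSum.toAddMonoid (klPsiStalk G C x₀ hmax)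

lemma klPsiAux_of (G : AbData X) (C : Set X) (x₀ : X)
    (hmax : ∀ y ∈ C, pt x₀ ≤ pt y → pt y ≤ pt x₀) (x : ↥C) (b : stalk ((restr C).obj G) x) :
    klPsiAux G C x₀ hmax (cosecOf ((restr C).obj G) x b) = klPsiStalk G C x₀ hmax x b := by
  letI := Classical.decEq ↥C
  simp only [klPsiAux, cosecOf, DirectSum.toAddMonoid_of]

lemma klPsi_rel (G : AbData X) (C : Set X) (x₀ : X)
    (hmax : ∀ y ∈ C, pt x₀ ≤ pt y → pt y ≤ pt x₀) :
    cosecRel ((restr C).obj G) ≤ (klPsiAux G C x₀ hmax).ker := by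
  rw [cosecRel, AddSubgroup.closure_le]
  rintro w ⟨x, y, hxy, b, rfl⟩
  rw [SetLike.mem_coe, AddMonoidHom.mem_ker, map_sub, klPsiAux_of, klPsiAux_of]
  have hxyX : pt (x : X) ≤ pt (y : X) := (subtype_pt_le_iff x y).mp hxy
  by_cases hyT : pt x₀ ≤ pt (y : X)
  · by_cases hxT : pt x₀ ≤ pt (x : X)
    · rw [klPsiStalk_pos G C x₀ hmax y hyT, klPsiStalk_pos G C x₀ hmax x hxT]
      have h2 : G.map (homOfLE (hmax y.1 y.2 hyT)) (((restr C).obj G).map (homOfLE hxy) b)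
          = G.map (homOfLE (hmax x.1 x.2 hxT)) b := by
        show G.map (homOfLE (hmax y.1 y.2 hyT)) (G.map (homOfLE hxyX) b) = _
        exact congrArg (fun f => f.hom b) ((Functor.map_comp G _ _).symm.trans
          (data_map_eq G (homOfLE hxyX ≫ homOfLE (hmax y.1 y.2 hyT))
            (homOfLE (hmax x.1 x.2 hxT))))
      exact (congrArg (fun t => QuotientAddGroup.mk' (klDelta G C x₀).range (0, t)
        - QuotientAddGroup.mk' (klDelta G C x₀).range (0, G.map (homOfLE (hmax x.1 x.2 hxT)) b))
        h2).trans (sub_self _)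
    · have hxY : x.1 ∈ subY0 C x₀ := ⟨⟨x.2, hxT⟩, hxyX.trans (hmax y.1 y.2 hyT)⟩
      rw [klPsiStalk_pos G C x₀ hmax y hyT, klPsiStalk_neg G C x₀ hmax x hxT, ← map_sub]
      refine (QuotientAddGroup.eq_zero_iff _).mpr ?_
      refine AddMonoidHom.mem_range.mpr
        ⟨-(cosecMk ((restr (subY0 C x₀)).obj G) ⟨x.1, hxY⟩ b), ?_⟩
      have h2 : G.map (homOfLE (hmax y.1 y.2 hyT)) (((restr C).obj G).map (homOfLE hxy) b)
          = G.map (homOfLE (subY0_le C x₀ ⟨x.1, hxY⟩)) b := by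
        show G.map (homOfLE (hmax y.1 y.2 hyT)) (G.map (homOfLE hxyX) b) = _
        exact congrArg (fun f => f.hom b) ((Functor.map_comp G _ _).symm.trans
          (data_map_eq G (homOfLE hxyX ≫ homOfLE (hmax y.1 y.2 hyT))
            (homOfLE (subY0_le C x₀ ⟨x.1, hxY⟩))))
      rw [map_neg, klDelta_apply]
      refine Prod.ext ?_ ?_
      · exact (congrArg Neg.neg (cosecExtOn_mk G (subY0_subset C x₀) ⟨x.1, hxY⟩ b)).trans
          (zero_sub _).symm
      · exact (neg_neg _).trans ((tauBar_mk G x₀ (subY0 C x₀) (subY0_le C x₀) ⟨x.1, hxY⟩ b).trans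
          (h2.symm.trans (sub_zero _).symm))
  · have hxT : ¬ pt x₀ ≤ pt (x : X) := fun h => hyT (h.trans hxyX)
    rw [klPsiStalk_neg G C x₀ hmax y hyT, klPsiStalk_neg G C x₀ hmax x hxT, sub_eq_zero]
    have h' : pt (⟨x.1, x.2, hxT⟩ : ↥(subC0 C x₀)) ≤ pt (⟨y.1, y.2, hyT⟩ : ↥(subC0 C x₀)) :=
      (subtype_pt_le_iff _ _).mpr hxyX
    have h1 : cosecMk ((restr (subC0 C x₀)).obj G) ⟨y.1, y.2, hyT⟩
          (((restr C).obj G).map (homOfLE hxy) b)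
        = cosecMk ((restr (subC0 C x₀)).obj G) ⟨x.1, x.2, hxT⟩ b :=
      cosecMk_rel ((restr (subC0 C x₀)).obj G) h' b
    exact congrArg (QuotientAddGroup.mk' (klDelta G C x₀).range) (Prod.ext h1 rfl)

noncomputable def klPsi (G : AbData X) (C : Set X) (x₀ : X)
    (hmax : ∀ y ∈ C, pt x₀ ≤ pt y → pt y ≤ pt x₀) :
    cosecGrp ((restr C).obj G) →+
      (cosecGrp ((restr (subC0 C x₀)).obj G) × G.obj (pt x₀)) ⧸ (klDelta G C x₀).range :=
  QuotientAddGroup.lift _ (klPsiAux G C x₀ hmax) (klPsi_rel G C x₀ hmax)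

lemma klPsi_mk (G : AbData X) (C : Set X) (x₀ : X)
    (hmax : ∀ y ∈ C, pt x₀ ≤ pt y → pt y ≤ pt x₀) (x : ↥C) (b : stalk ((restr C).obj G) x) :
    klPsi G C x₀ hmax (cosecMk ((restr C).obj G) x b) = klPsiStalk G C x₀ hmax x b :=
  klPsiAux_of G C x₀ hmax x b

lemma klPsi_ext (G : AbData X) (C : Set X) (x₀ : X)
    (hmax : ∀ y ∈ C, pt x₀ ≤ pt y → pt y ≤ pt x₀)
    (u : cosecGrp ((restr (subC0 C x₀)).obj G)) :
    klPsi G C x₀ hmax (cosecExtOn G (subC0_subset C x₀) u)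
      = QuotientAddGroup.mk' (klDelta G C x₀).range (u, 0) := by
  have hh : (klPsi G C x₀ hmax).comp (cosecExtOn G (subC0_subset C x₀))
      = (QuotientAddGroup.mk' (klDelta G C x₀).range).comp (AddMonoidHom.inl _ _) := by
    refine cosecHom_ext fun y b => ?_
    rw [AddMonoidHom.comp_apply, AddMonoidHom.comp_apply, cosecExtOn_mk]
    exact (klPsi_mk G C x₀ hmax ⟨y.1, subC0_subset C x₀ y.2⟩ b).trans
      (klPsiStalk_neg G C x₀ hmax ⟨y.1, subC0_subset C x₀ y.2⟩ y.2.2 b)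
  exact DFunLike.congr_fun hh u

lemma klPsi_m (G : AbData X) (C : Set X) (x₀ : X) (hx₀ : x₀ ∈ C)
    (hmax : ∀ y ∈ C, pt x₀ ≤ pt y → pt y ≤ pt x₀) (a : G.obj (pt x₀)) :
    klPsi G C x₀ hmax (cosecMk ((restr C).obj G) ⟨x₀, hx₀⟩ a)
      = QuotientAddGroup.mk' (klDelta G C x₀).range (0, a) := by
  refine (klPsi_mk G C x₀ hmax ⟨x₀, hx₀⟩ a).trans
    ((klPsiStalk_pos G C x₀ hmax ⟨x₀, hx₀⟩ (le_refl (pt x₀)) a).trans ?_)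
  have h2 : G.map (homOfLE (hmax (⟨x₀, hx₀⟩ : ↥C).1 (⟨x₀, hx₀⟩ : ↥C).2 (le_refl (pt x₀)))) a
      = a := by
    rw [data_map_eq G _ (𝟙 (pt x₀)), CategoryTheory.Functor.map_id]
    rfl
  exact congrArg (fun t => QuotientAddGroup.mk' (klDelta G C x₀).range (0, t)) h2

lemma klZero (G : AbData X) (C : Set X) (x₀ : X) (hx₀ : x₀ ∈ C)
    (v : cosecGrp ((restr (subY0 C x₀)).obj G)) :
    cosecExtOn G (subC0_subset C x₀) (cosecExtOn G (subY0_subset C x₀) v)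
      = cosecMk ((restr C).obj G) ⟨x₀, hx₀⟩ (tauBar G x₀ (subY0 C x₀) (subY0_le C x₀) v) := by
  have hh : (cosecExtOn G (subC0_subset C x₀)).comp (cosecExtOn G (subY0_subset C x₀))
      = (cosecMk ((restr C).obj G) ⟨x₀, hx₀⟩).comp
          (tauBar G x₀ (subY0 C x₀) (subY0_le C x₀)) := by
    refine cosecHom_ext fun y b => ?_
    have t1 : tauBar G x₀ (subY0 C x₀) (subY0_le C x₀)
        (cosecMk ((restr (subY0 C x₀)).obj G) y b)
        = G.map (homOfLE (subY0_le C x₀ y)) b := tauBar_mk G x₀ (subY0 C x₀) (subY0_le C x₀) y b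
    refine Eq.trans ?_ (congrArg (cosecMk ((restr C).obj G) ⟨x₀, hx₀⟩) t1.symm)
    have h' : pt (⟨(⟨y.1, subY0_subset C x₀ y.2⟩ : ↥(subC0 C x₀)).1,
          subC0_subset C x₀ (⟨y.1, subY0_subset C x₀ y.2⟩ : ↥(subC0 C x₀)).2⟩ : ↥C)
        ≤ pt (⟨x₀, hx₀⟩ : ↥C) := (subtype_pt_le_iff _ _).mpr (subY0_le C x₀ y)
    exact (congrArg (cosecExtOn G (subC0_subset C x₀)) (cosecExtOn_mk G (subY0_subset C x₀) y b)).trans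
      ((cosecExtOn_mk G (subC0_subset C x₀) ⟨y.1, subY0_subset C x₀ y.2⟩ b).trans
        (cosecMk_rel ((restr C).obj G) h' b).symm)
  exact DFunLike.congr_fun hh v

lemma klKer (G : AbData X) (C : Set X) (x₀ : X) (hx₀ : x₀ ∈ C)
    (hmax : ∀ y ∈ C, pt x₀ ≤ pt y → pt y ≤ pt x₀)
    (u : cosecGrp ((restr (subC0 C x₀)).obj G)) (a : G.obj (pt x₀))
    (h : cosecExtOn G (subC0_subset C x₀) u + cosecMk ((restr C).obj G) ⟨x₀, hx₀⟩ a = 0) :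
    ∃ v, cosecExtOn G (subY0_subset C x₀) v = u
      ∧ tauBar G x₀ (subY0 C x₀) (subY0_le C x₀) v = -a := by
  have h2 := congrArg (klPsi G C x₀ hmax) h
  rw [map_add, map_zero, klPsi_ext G C x₀ hmax, klPsi_m G C x₀ hx₀ hmax, ← map_add] at h2
  have h3 : ((u, 0) + (0, a) : cosecGrp ((restr (subC0 C x₀)).obj G) × G.obj (pt x₀))
      = (u, a) := by rw [Prod.mk_add_mk, add_zero, zero_add]
  rw [h3] at h2
  obtain ⟨v, hv⟩ := AddMonoidHom.mem_range.mp ((QuotientAddGroup.eq_zero_iff _).mp h2)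
  rw [klDelta_apply] at hv
  refine ⟨v, congrArg Prod.fst hv, ?_⟩
  have h4 : -(tauBar G x₀ (subY0 C x₀) (subY0_le C x₀) v) = a := congrArg Prod.snd hv
  exact neg_eq_iff_eq_neg.mp h4

end aux17c

section aux17d
variable {X : Type} [TopologicalSpace X] [Finite X] {F' F F'' : AbData X}

lemma inj_on_closed (i : F' ⟶ F) (p : F ⟶ F'')
    (hinj : ∀ q : Specialization X, Function.Injective (i.app q))
    (hexact : ∀ q : Specialization X, Function.Exact (i.app q) (p.app q))
    (hsurj : ∀ q : Specialization X, Function.Surjective (p.app q))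
    (hcofl : Coflasque F'') :
    ∀ (n : ℕ) (C : Set X), IsClosed C → C.ncard ≤ n →
      Function.Injective (cosecMap ((restr C).map i)) := by
  intro n
  induction n with
  | zero =>
    intro C _ hcard
    have hC : C = ∅ := (Set.ncard_eq_zero (Set.toFinite C)).mp (Nat.le_zero.mp hcard)
    subst hC
    have hz : ∀ z : cosecGrp ((restr (∅ : Set X)).obj F'), z = 0 := by
      intro z
      refine QuotientAddGroup.induction_on z fun w => ?_
      refine DirectSum.induction_on w rfl ?_ ?_
      · intro x _
        exact (Set.notMem_empty x.1 x.2).elim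
      · intro w₁ w₂ h₁ h₂
        rw [QuotientAddGroup.mk_add, h₁, h₂]
        exact add_zero _
    exact fun z₁ z₂ _ => (hz z₁).trans (hz z₂).symm
  | succ n IH =>
    intro C hCclosed hcard
    rcases Set.eq_empty_or_nonempty C with hCe | hC
    · exact IH C hCclosed (by rw [hCe, Set.ncard_empty]; exact Nat.zero_le n)
    obtain ⟨x₀, hx₀C, hmax⟩ := exists_pt_max hC
    have hdownC : ∀ y ∈ C, ∀ z : X, pt z ≤ pt y → z ∈ C :=
      fun y hy z hz => mem_of_closed_le hCclosed hy hz
    have hC₀closed : IsClosed (subC0 C x₀) :=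
      isClosed_of_down fun y hy z hz =>
        ⟨hdownC y hy.1 z hz, fun hle => hy.2 (hle.trans hz)⟩
    have hY₀closed : IsClosed (subY0 C x₀) :=
      isClosed_of_down fun y hy z hz =>
        ⟨⟨hdownC y hy.1.1 z hz, fun hle => hy.1.2 (hle.trans hz)⟩, hz.trans hy.2⟩
    have hC₀card : (subC0 C x₀).ncard ≤ n := by
      have hss : subC0 C x₀ ⊂ C :=
        ⟨subC0_subset C x₀, fun hsub => (hsub hx₀C).2 (le_refl (pt x₀))⟩
      have hlt := Set.ncard_lt_ncard hss (Set.toFinite C)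
      omega
    have IH0 := IH (subC0 C x₀) hC₀closed hC₀card
    have hYinj : Function.Injective (cosecExtOn F'' (subY0_subset C x₀)) := by
      have h1 : Function.Injective ((cosecExtFromSub F'' (subC0 C x₀)).comp
          (cosecExtOn F'' (subY0_subset C x₀))) := by
        rw [extFromSub_factor F'' (subY0_subset C x₀)]
        exact hcofl _ hY₀closed
      rw [AddMonoidHom.coe_comp] at h1
      exact h1.of_comp
    refine (injective_iff_map_eq_zero _).mpr fun z' hz' => ?_
    obtain ⟨u, a, rfl⟩ := phi_surj F' C x₀ hx₀C hmax z'
    rw [map_add] at hz'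
    have hnat := DFunLike.congr_fun (cosecExtOn_natural i (subC0_subset C x₀)) u
    simp only [AddMonoidHom.comp_apply] at hnat
    rw [hnat] at hz'
    have hz'' := (congrArg (fun t => cosecExtOn F (subC0_subset C x₀)
      (cosecMap ((restr (subC0 C x₀)).map i) u) + t)
      (cosecMap_mk ((restr C).map i) ⟨x₀, hx₀C⟩ a)).symm.trans hz'
    obtain ⟨v, hv1, hv2⟩ := klKer F C x₀ hx₀C hmax _ _ hz''
    have hp0 : cosecMap ((restr (subY0 C x₀)).map p) v = 0 := by
      apply hYinj
      rw [map_zero]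
      have hnat2 := DFunLike.congr_fun (cosecExtOn_natural p (subY0_subset C x₀)) v
      simp only [AddMonoidHom.comp_apply] at hnat2
      rw [← hnat2, hv1]
      exact cosecMap_comp_zero ((restr (subC0 C x₀)).map i) ((restr (subC0 C x₀)).map p)
        (fun q b => (hexact ((inc (subC0 C x₀)).obj q)).apply_apply_eq_zero b) u
    obtain ⟨v', hv'⟩ := cosecMap_exact_mid ((restr (subY0 C x₀)).map i)
      ((restr (subY0 C x₀)).map p)
      (fun q => hsurj ((inc (subY0 C x₀)).obj q))
      (fun q => hexact ((inc (subY0 C x₀)).obj q)) v hp0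
    have hu : cosecExtOn F' (subY0_subset C x₀) v' = u := by
      apply IH0
      have hnat3 := DFunLike.congr_fun (cosecExtOn_natural i (subY0_subset C x₀)) v'
      simp only [AddMonoidHom.comp_apply] at hnat3
      rw [hnat3, hv', hv1]
    have ha : tauBar F' x₀ (subY0 C x₀) (subY0_le C x₀) v' = -a := by
      apply hinj (pt x₀)
      have hnat4 := tauBar_natural i x₀ (subY0 C x₀) (subY0_le C x₀) v'
      rw [← hnat4, hv', hv2, map_neg]
      rfl
    rw [← hu]
    have ha2 : a = -(tauBar F' x₀ (subY0 C x₀) (subY0_le C x₀) v') := by rw [ha, neg_neg]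
    rw [ha2]
    have e : cosecMk ((restr C).obj F') ⟨x₀, hx₀C⟩
        (-(tauBar F' x₀ (subY0 C x₀) (subY0_le C x₀) v') : F'.obj (pt x₀))
        = -(cosecMk ((restr C).obj F') ⟨x₀, hx₀C⟩
          (tauBar F' x₀ (subY0 C x₀) (subY0_le C x₀) v')) := map_neg _ _
    rw [e, klZero F' C x₀ hx₀C v']
    exact add_neg_cancel _

end aux17d

/-- **Statement 17.** If `0 → F' → F → F'' → 0` is a short exact sequence of abelian data
(exactness is stalkwise) on a finite topological space `X` and `F''` is coflasque, then
`0 → L(X,F') → L(X,F) → L(X,F'') → 0` is exact. -/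
theorem statement17 {X : Type} [TopologicalSpace X] [Finite X] {F' F F'' : AbData X}
    (i : F' ⟶ F) (p : F ⟶ F'')
    (hinj : ∀ q : Specialization X, Function.Injective (i.app q))
    (hexact : ∀ q : Specialization X, Function.Exact (i.app q) (p.app q))
    (hsurj : ∀ q : Specialization X, Function.Surjective (p.app q))
    (hcofl : Coflasque F'') :
    Function.Injective (cosecMap i) ∧ Function.Exact (cosecMap i) (cosecMap p) ∧
      Function.Surjective (cosecMap p) := by
  refine ⟨?_, ?_, ?_⟩
  · have huniv := inj_on_closed i p hinj hexact hsurj hcofl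
      (Set.univ : Set X).ncard Set.univ isClosed_univ le_rfl
    refine (injective_iff_map_eq_zero _).mpr fun z hz => ?_
    have h1 : cosecMap ((restr (Set.univ : Set X)).map i) (toUniv F' z) = 0 := by
      rw [← toUniv_natural i z, hz, map_zero]
    have h2 : toUniv F' z = 0 := (injective_iff_map_eq_zero _).mp huniv _ h1
    have h3 := extFromSub_toUniv F' z
    rw [← h3, h2, map_zero]
  · intro b
    constructor
    · exact fun hb => cosecMap_exact_mid i p hsurj hexact b hb
    · rintro ⟨w, rfl⟩
      exact cosecMap_comp_zero i p (fun q c => (hexact q).apply_apply_eq_zero c) w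
  · exact cosecMap_surjective p hsurj
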